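/- A Hartogs domain construction: if D ⊆ ℂⁿ is invariant under the circle action (t, (z₁,...,zₙ)) ↦ (tz₁, z₂,...,zₙ) for t ∈ S¹, and f is holomorphic on D, then each coefficient function aₖ(z) in the expansion f(z) = Σ aₖ(z₂,...,zₙ) z₁ᵏ, given by aₖ(z) = (1/2πi)∮ f(tz₁, z₂,...,zₙ) t^{-k-1} dt / z₁ᵏ, is holomorphic where defined; equivalently, (1/2π)∫₀^{2π} f(e^{iθ}z₁, z₂,...,zₙ) e^{-ikθ} dθ is holomorphic on D. -/

import Mathlib

/-!
The coefficient is `∫ f (L θ z) * c θ dθ` with `c θ = e^{-ikθ}`, where `L θ` is the linear map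
multiplying the first coordinate by `e^{iθ}`; by invariance every `L θ` maps `D` into itself.
Such an integral is differentiated under the integral sign. The orbit `{L θ z₀}` of `z₀ ∈ D` is
compact and lies in `D`, so Cauchy estimates bound `fderiv f` on a thickening of it; for `z` near
`z₀` all the `L θ z` lie in that thickening, which gives a dominating bound for the
`z`-derivative of the integrand.
-/

open Metric Set Filter Topology MeasureTheory Function
open scoped Interval

section ScaleCoord

variable {𝕜 ι : Type*} [NontriviallyNormedField 𝕜] [DecidableEq ι]

noncomputable def scaleCoord (i : ι) (t : 𝕜) : (ι → 𝕜) →L[𝕜] (ι → 𝕜) :=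
  ContinuousLinearMap.id 𝕜 _ +
    (t - 1) • (ContinuousLinearMap.single 𝕜 (fun _ => 𝕜) i).comp (ContinuousLinearMap.proj i)

theorem scaleCoord_apply (i : ι) (t : 𝕜) (z : ι → 𝕜) :
    scaleCoord i t z = update z i (t * z i) := by
  ext j
  rcases eq_or_ne j i with rfl | hj
  · simp [scaleCoord, sub_mul]
  · simp [scaleCoord, hj]

theorem continuous_scaleCoord [Fintype ι] (i : ι) : Continuous (scaleCoord (𝕜 := 𝕜) i) := by
  unfold scaleCoord
  fun_prop

end ScaleCoord

theorem eventually_forall_mem_thickening_image {X Y E : Type*} [TopologicalSpace X]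
    [TopologicalSpace Y] [PseudoMetricSpace E] {g : X → Y → E} (hg : Continuous (uncurry g))
    {S : Set Y} (hS : IsCompact S) (x₀ : X) {δ : ℝ} (hδ : 0 < δ) :
    ∀ᶠ x in 𝓝 x₀, ∀ y ∈ S, g x y ∈ thickening δ (g x₀ '' S) := by
  refine hS.eventually_forall_of_forall_eventually fun y hy => ?_
  have hmem : g x₀ y ∈ thickening δ (g x₀ '' S) :=
    self_subset_thickening hδ _ (mem_image_of_mem _ hy)
  exact hg.continuousAt.eventually (isOpen_thickening.mem_nhds hmem)

section Cauchy

variable {E F : Type*} [NormedAddCommGroup E] [NormedSpace ℂ E] [ProperSpace E]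
  [NormedAddCommGroup F] [NormedSpace ℂ F]

theorem exists_thickening_subset_forall_norm_fderiv_le {U K : Set E} (hU : IsOpen U)
    (hK : IsCompact K) (hKU : K ⊆ U) {f : E → F} (hf : DifferentiableOn ℂ f U) :
    ∃ δ > 0, thickening δ K ⊆ U ∧ ∃ C, ∀ y ∈ thickening δ K, ‖fderiv ℂ f y‖ ≤ C := by
  obtain ⟨δ, hδ, hδU⟩ := hK.exists_cthickening_subset_open hU hKU
  obtain ⟨M, hM⟩ := hK.cthickening.exists_bound_of_continuousOn (hf.continuousOn.mono hδU)
  refine ⟨δ / 2, half_pos hδ, (thickening_subset_cthickening_of_le (by linarith) K).trans hδU,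
    2 * M / (δ / 2), fun y hy => ?_⟩
  have hball : ball y (δ / 2) ⊆ cthickening δ K :=
    calc ball y (δ / 2) ⊆ thickening (δ / 2) (thickening (δ / 2) K) := ball_subset_thickening hy _
      _ ⊆ thickening (δ / 2 + δ / 2) K := thickening_thickening_subset _ _ _
      _ ⊆ cthickening δ K := thickening_subset_cthickening_of_le (by linarith) K
  refine Complex.norm_fderiv_le_div_of_mapsTo_ball (hf.mono (hball.trans hδU))
    (fun w hw => ?_) (half_pos hδ)
  rw [mem_closedBall, dist_eq_norm, two_mul]
  exact (norm_sub_le _ _).trans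
    (add_le_add (hM w (hball hw)) (hM y (hball (mem_ball_self (half_pos hδ)))))

end Cauchy

section ParametricIntegral

variable {E : Type*} [NormedAddCommGroup E] [NormedSpace ℂ E] [FiniteDimensional ℂ E]
  {U : Set E} {f : E → ℂ} {L : ℝ → E →L[ℂ] E} {c : ℝ → ℂ} {a b : ℝ}

theorem hasFDerivAt_intervalIntegral_comp_clm_mul (hU : IsOpen U) (hf : DifferentiableOn ℂ f U)
    (hL : Continuous L) (hLU : ∀ θ ∈ [[a, b]], MapsTo (L θ) U U) (hc : Continuous c)
    {x₀ : E} (hx₀ : x₀ ∈ U) :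
    HasFDerivAt (fun x => ∫ θ in a..b, f (L θ x) * c θ)
      (∫ θ in a..b, c θ • (fderiv ℂ f (L θ x₀)).comp (L θ)) x₀ := by
  borelize E
  set K := (fun θ => L θ x₀) '' [[a, b]]
  have hKU : K ⊆ U := image_subset_iff.2 fun θ hθ => hLU θ hθ hx₀
  have hK : IsCompact K := isCompact_uIcc.image (hL.clm_apply continuous_const)
  obtain ⟨δ, hδ, hδU, C, hC⟩ := exists_thickening_subset_forall_norm_fderiv_le hU hK hKU hf
  have hLx : Continuous (uncurry fun x θ => L θ x) :=
    (hL.comp continuous_snd).clm_apply continuous_fst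
  set s := {x | ∀ θ ∈ [[a, b]], L θ x ∈ thickening δ K}
  have hs : s ∈ 𝓝 x₀ := eventually_forall_mem_thickening_image hLx isCompact_uIcc x₀ hδ
  have hdiff : ∀ x ∈ s, ∀ θ ∈ [[a, b]], HasFDerivAt (fun x => f (L θ x) * c θ)
      (c θ • (fderiv ℂ f (L θ x)).comp (L θ)) x := fun x hx θ hθ =>
    (((hf.differentiableAt (hU.mem_nhds (hδU (hx θ hθ)))).hasFDerivAt).comp x
      (L θ).hasFDerivAt).mul_const (c θ)
  have hcont : ∀ x ∈ s, ContinuousOn (fun θ => f (L θ x) * c θ) [[a, b]] := fun x hx =>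
    (ContinuousOn.comp hf.continuousOn (hL.clm_apply continuous_const).continuousOn
      fun θ hθ => hδU (hx θ hθ)).mul hc.continuousOn
  refine intervalIntegral.hasFDerivAt_integral_of_dominated_of_fderiv_le
    (F := fun x θ => f (L θ x) * c θ) (F' := fun x θ => c θ • (fderiv ℂ f (L θ x)).comp (L θ))
    hs ?_ (hcont x₀ (mem_of_mem_nhds hs)).intervalIntegrable ?_ ?_
    ((by fun_prop : Continuous fun θ => ‖c θ‖ * (C * ‖L θ‖)).intervalIntegrable a b) ?_
  · filter_upwards [hs] with x hx
    exact ((hcont x hx).mono uIoc_subset_uIcc).aestronglyMeasurable measurableSet_uIoc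
  · have hfL : AEStronglyMeasurable (fun θ => fderiv ℂ f (L θ x₀)) (volume.restrict (Ι a b)) :=
      ((measurable_fderiv ℂ f).comp (hL.clm_apply continuous_const).measurable).aestronglyMeasurable
    exact hc.aestronglyMeasurable.smul
      (isBoundedBilinearMap_comp.continuous.comp_aestronglyMeasurable₂ hfL hL.aestronglyMeasurable)
  · refine ae_of_all _ fun θ hθ x hx => ?_
    calc ‖c θ • (fderiv ℂ f (L θ x)).comp (L θ)‖
        ≤ ‖c θ‖ * (‖fderiv ℂ f (L θ x)‖ * ‖L θ‖) := by
          rw [norm_smul]; gcongr; exact ContinuousLinearMap.opNorm_comp_le _ _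
      _ ≤ ‖c θ‖ * (C * ‖L θ‖) := by gcongr; exact hC _ (hx θ (uIoc_subset_uIcc hθ))
  · exact ae_of_all _ fun θ hθ x hx => hdiff x hx θ (uIoc_subset_uIcc hθ)

theorem differentiableOn_intervalIntegral_comp_clm_mul (hU : IsOpen U)
    (hf : DifferentiableOn ℂ f U) (hL : Continuous L) (hLU : ∀ θ ∈ [[a, b]], MapsTo (L θ) U U)
    (hc : Continuous c) :
    DifferentiableOn ℂ (fun x => ∫ θ in a..b, f (L θ x) * c θ) U := fun _ hx =>
  (hasFDerivAt_intervalIntegral_comp_clm_mul hU hf hL hLU hc hx).differentiableAt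
    |>.differentiableWithinAt

end ParametricIntegral

/-- Hartogs expansion coefficients: if `D ⊆ ℂⁿ` is invariant under the circle action
`(t, z) ↦ (t z₁, z₂, …, zₙ)` for `|t| = 1` and `f` is holomorphic on `D`, then for each
`k ∈ ℤ` the Fourier coefficient
`z ↦ (1/2π) ∫₀^{2π} f(e^{iθ} z₁, z₂, …, zₙ) e^{-ikθ} dθ` is holomorphic on `D`. -/
theorem hartogs_fourier_coefficient_holomorphic {n : ℕ} (D : Set (Fin (n + 1) → ℂ))
    (hDo : IsOpen D)
    (hinv : ∀ t : ℂ, ‖t‖ = 1 → ∀ z ∈ D, Function.update z 0 (t * z 0) ∈ D)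
    (f : (Fin (n + 1) → ℂ) → ℂ) (hf : DifferentiableOn ℂ f D) (k : ℤ) :
    DifferentiableOn ℂ
      (fun z => (1 / (2 * (Real.pi : ℂ))) *
        ∫ θ in (0:ℝ)..(2 * Real.pi),
          f (Function.update z 0 (Complex.exp (θ * Complex.I) * z 0)) *
            Complex.exp (-(k : ℂ) * θ * Complex.I)) D := by
  have hrot : Continuous fun θ : ℝ => scaleCoord (0 : Fin (n + 1)) (Complex.exp (θ * Complex.I)) :=
    (continuous_scaleCoord 0).comp (by fun_prop)
  have hmaps : ∀ θ : ℝ, MapsTo (scaleCoord 0 (Complex.exp (θ * Complex.I))) D D := fun θ z hz => by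
    rw [scaleCoord_apply]
    exact hinv _ (Complex.norm_exp_ofReal_mul_I θ) z hz
  simp_rw [← scaleCoord_apply]
  exact (differentiableOn_intervalIntegral_comp_clm_mul hDo hf hrot (fun θ _ => hmaps θ)
    (by fun_prop)).const_mul _
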